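/- Fix an integer n ≥ 1, masses m₁, m₂ > 0 and exponents γ₁, γ₂ > 1. Let U = (n₁, n₂, w) and V = (ν₁, ν₂, ω) be macroscopic states with n₁, n₂ > 0, ν₁, ν₂ ≥ 0 and ρ(V) > 0. Then η(V) − η(U) − [ (−(m₁/2)|u(U)|² + s₁′(n₁))(ν₁ − n₁) + (−(m₂/2)|u(U)|² + s₂′(n₂))(ν₂ − n₂) + u(U)·(ω − w) ] = (ρ(V)/2) |u(V) − u(U)|² + s₁(ν₁|n₁) + s₂(ν₂|n₂). (The bracketed expression is Dη(U)·(V − U), so the left-hand side is the relative entropy η(V|U).) -/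

import Mathlib

open MeasureTheory

/-- The isentropic internal-energy function `s(x) = m^{n(γ−1)/2} x^γ/(γ−1)`. -/
noncomputable def sFn (n : ℕ) (m γ : ℝ) (x : ℝ) : ℝ :=
  m ^ ((n : ℝ) * (γ - 1) / 2) * x ^ γ / (γ - 1)

/-- Its derivative `s′(x) = γ m^{n(γ−1)/2} x^{γ−1}/(γ−1)`. -/
noncomputable def sFn' (n : ℕ) (m γ : ℝ) (x : ℝ) : ℝ :=
  γ * m ^ ((n : ℝ) * (γ - 1) / 2) * x ^ (γ - 1) / (γ - 1)

/-- The relative quantity `s(y|x) = s(y) − s(x) − s′(x)(y − x)`. -/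
noncomputable def sRel (n : ℕ) (m γ : ℝ) (y x : ℝ) : ℝ :=
  sFn n m γ y - sFn n m γ x - sFn' n m γ x * (y - x)

/-! The internal-energy terms cancel by the definition of `sRel`, so the identity reduces to the
kinetic one: `w ↦ ‖w‖²/(2ρ)` is jointly quadratic in `(ρ, w)`, and its Bregman divergence at
`(ρ_U, w)` with velocity `u = w/ρ_U` is `(ρ_V/2)‖ω/ρ_V − u‖²`. -/

theorem kinetic_bregman_eq {E : Type*} [NormedAddCommGroup E] [InnerProductSpace ℝ E]
    {a : ℝ} (ha : a ≠ 0) (b : ℝ) (ω w : E) :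
    ‖ω‖ ^ 2 / (2 * a) - ‖w‖ ^ 2 / (2 * b)
        - (-(a - b) / 2 * ‖b⁻¹ • w‖ ^ 2 + inner ℝ (b⁻¹ • w) (ω - w)) =
      a / 2 * ‖a⁻¹ • ω - b⁻¹ • w‖ ^ 2 := by
  simp only [norm_sub_sq_real, inner_sub_right, real_inner_smul_left, real_inner_smul_right,
    norm_smul, Real.norm_eq_abs, mul_pow, sq_abs, real_inner_self_eq_norm_sq, real_inner_comm ω w]
  have hb : b * b⁻¹ ^ 2 = b⁻¹ := by
    rcases eq_or_ne b 0 with rfl | hb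
    · simp
    · field_simp
  field_simp
  linear_combination (a * ‖w‖ ^ 2 - 2 * a * inner ℝ ω w) * hb

theorem relative_entropy_identity_general (n : ℕ) (m₁ m₂ γ₁ γ₂ : ℝ)
    (n₁ n₂ : ℝ) (w : EuclideanSpace ℝ (Fin n)) (ν₁ ν₂ : ℝ)
    (ω : EuclideanSpace ℝ (Fin n))
    (hρV : 0 < m₁ * ν₁ + m₂ * ν₂) :
    (‖ω‖ ^ 2 / (2 * (m₁ * ν₁ + m₂ * ν₂)) + sFn n m₁ γ₁ ν₁ + sFn n m₂ γ₂ ν₂)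
      - (‖w‖ ^ 2 / (2 * (m₁ * n₁ + m₂ * n₂)) + sFn n m₁ γ₁ n₁ + sFn n m₂ γ₂ n₂)
      - ((-(m₁ / 2) * ‖(m₁ * n₁ + m₂ * n₂)⁻¹ • w‖ ^ 2 + sFn' n m₁ γ₁ n₁) * (ν₁ - n₁)
        + (-(m₂ / 2) * ‖(m₁ * n₁ + m₂ * n₂)⁻¹ • w‖ ^ 2 + sFn' n m₂ γ₂ n₂) * (ν₂ - n₂)
        + (inner ℝ ((m₁ * n₁ + m₂ * n₂)⁻¹ • w) (ω - w) : ℝ)) =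
      (m₁ * ν₁ + m₂ * ν₂) / 2 *
          ‖(m₁ * ν₁ + m₂ * ν₂)⁻¹ • ω - (m₁ * n₁ + m₂ * n₂)⁻¹ • w‖ ^ 2
        + sRel n m₁ γ₁ ν₁ n₁ + sRel n m₂ γ₂ ν₂ n₂ := by
  unfold sRel
  linear_combination kinetic_bregman_eq hρV.ne' (m₁ * n₁ + m₂ * n₂) ω w

/-- For macroscopic states `U = (n₁, n₂, w)` (with `n₁, n₂ > 0`) and
`V = (ν₁, ν₂, ω)` (with `ν₁, ν₂ ≥ 0` and `ρ(V) > 0`), the relative entropy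
`η(V) − η(U) − Dη(U)·(V − U)` equals
`(ρ(V)/2)|u(V) − u(U)|² + s₁(ν₁|n₁) + s₂(ν₂|n₂)`, where `ρ(U) = m₁n₁ + m₂n₂`,
`u(U) = w/ρ(U)`, and `η(U) = |w|²/(2ρ(U)) + s₁(n₁) + s₂(n₂)`. -/
theorem relative_entropy_identity (n : ℕ) (hn : 1 ≤ n) (m₁ m₂ γ₁ γ₂ : ℝ)
    (hm₁ : 0 < m₁) (hm₂ : 0 < m₂) (hγ₁ : 1 < γ₁) (hγ₂ : 1 < γ₂)
    (n₁ n₂ : ℝ) (w : EuclideanSpace ℝ (Fin n)) (ν₁ ν₂ : ℝ)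
    (ω : EuclideanSpace ℝ (Fin n))
    (hn₁ : 0 < n₁) (hn₂ : 0 < n₂) (hν₁ : 0 ≤ ν₁) (hν₂ : 0 ≤ ν₂)
    (hρV : 0 < m₁ * ν₁ + m₂ * ν₂) :
    (‖ω‖ ^ 2 / (2 * (m₁ * ν₁ + m₂ * ν₂)) + sFn n m₁ γ₁ ν₁ + sFn n m₂ γ₂ ν₂)
      - (‖w‖ ^ 2 / (2 * (m₁ * n₁ + m₂ * n₂)) + sFn n m₁ γ₁ n₁ + sFn n m₂ γ₂ n₂)
      - ((-(m₁ / 2) * ‖(m₁ * n₁ + m₂ * n₂)⁻¹ • w‖ ^ 2 + sFn' n m₁ γ₁ n₁) * (ν₁ - n₁)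
        + (-(m₂ / 2) * ‖(m₁ * n₁ + m₂ * n₂)⁻¹ • w‖ ^ 2 + sFn' n m₂ γ₂ n₂) * (ν₂ - n₂)
        + (inner ℝ ((m₁ * n₁ + m₂ * n₂)⁻¹ • w) (ω - w) : ℝ)) =
      (m₁ * ν₁ + m₂ * ν₂) / 2 *
          ‖(m₁ * ν₁ + m₂ * ν₂)⁻¹ • ω - (m₁ * n₁ + m₂ * n₂)⁻¹ • w‖ ^ 2
        + sRel n m₁ γ₁ ν₁ n₁ + sRel n m₂ γ₂ ν₂ n₂ :=
  relative_entropy_identity_general n m₁ m₂ γ₁ γ₂ n₁ n₂ w ν₁ ν₂ ω hρV
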